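/- arXiv:math/0504111 — 5 statements merged into one kernel-verified Lean document; each statement's English description precedes it below -/
import Mathlib

section
/- With J as in the previous context, every facet of Δ(J) has cardinality n + m − 1; consequently Δ(J) is pure of dimension n + m − 2 and has exactly C(m+n−2, m−1) facets. -/
open Finset

/-- A set `F` of variables `t_{ij}` (pairs `(i,j) ∈ Fin m × Fin n`, the index
`j : Fin n` standing for the column index `j+1 ∈ {1,…,n}`) is a face of `Δ(J)`,
where `J` is generated by the monomials `t_{i₁j₁}⋯t_{iₖjₖ}` with
`i₁ < ⋯ < iₖ` and `j₁ + ⋯ + jₖ ≥ n + k`. -/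
def IsFaceDJ (m n : ℕ) (F : Finset (Fin m × Fin n)) : Prop :=
  ∀ S ⊆ F, (∀ a ∈ S, ∀ b ∈ S, a ≠ b → a.1 ≠ b.1) → S.Nonempty →
    ∑ x ∈ S, ((x.2 : ℕ) + 1) < n + S.card

/-- A facet is a maximal face. -/
def IsFacetDJ (m n : ℕ) (F : Finset (Fin m × Fin n)) : Prop :=
  IsFaceDJ m n F ∧ ∀ G, IsFaceDJ m n G → F ⊆ G → F = G

/-- The maximum of the column indices occurring in row `i` of `F` (0 if none). -/
def rowMax (m n : ℕ) (F : Finset (Fin m × Fin n)) (i : Fin m) : ℕ :=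
  (F.filter (fun x => x.1 = i)).sup (fun x => (x.2 : ℕ))

/-- The "staircase" set associated to `M : Fin m → ℕ`. -/
def FM (m n : ℕ) (M : Fin m → ℕ) : Finset (Fin m × Fin n) :=
  Finset.univ.filter (fun x => (x.2 : ℕ) ≤ M x.1)

lemma mem_FM {m n : ℕ} {M : Fin m → ℕ} {x : Fin m × Fin n} :
    x ∈ FM m n M ↔ (x.2 : ℕ) ≤ M x.1 := by
  simp [FM]

lemma le_rowMax {m n : ℕ} {F : Finset (Fin m × Fin n)} {x : Fin m × Fin n}
    (hx : x ∈ F) : (x.2 : ℕ) ≤ rowMax m n F x.1 := by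
  apply Finset.le_sup (f := fun y : Fin m × Fin n => (y.2 : ℕ))
  simp [Finset.mem_filter, hx]

lemma rowMax_mono {m n : ℕ} {F G : Finset (Fin m × Fin n)} (h : F ⊆ G) (i : Fin m) :
    rowMax m n F i ≤ rowMax m n G i :=
  Finset.sup_mono (Finset.filter_subset_filter _ h)

/-- A set is a face iff the row maxima sum to at most `n - 1`. -/
lemma face_iff (m n : ℕ) (hn : 1 ≤ n) (F : Finset (Fin m × Fin n)) :
    IsFaceDJ m n F ↔ ∑ i, rowMax m n F i ≤ n - 1 := by
  constructor
  · intro h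
    rcases F.eq_empty_or_nonempty with rfl | ⟨y, hy⟩
    · simp [rowMax]
    · set S := F.filter (fun x => (x.2 : ℕ) = rowMax m n F x.1) with hS
      have hSsub : S ⊆ F := Finset.filter_subset _ _
      have hrows : ∀ a ∈ S, ∀ b ∈ S, a ≠ b → a.1 ≠ b.1 := by
        intro a ha b hb hab h1
        apply hab
        simp only [hS, Finset.mem_filter] at ha hb
        have : (a.2 : ℕ) = (b.2 : ℕ) := by rw [ha.2, hb.2, h1]
        exact Prod.ext h1 (Fin.val_injective this)
      -- every nonempty row has its sup attained, hence appears in S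
      have hattain : ∀ i : Fin m, (F.filter (fun x => x.1 = i)).Nonempty →
          ∃ x ∈ S, x.1 = i := by
        intro i hi
        obtain ⟨b, hb, hbs⟩ := Finset.exists_mem_eq_sup _ hi (fun x => ((x.2 : ℕ)))
        refine ⟨b, ?_, (Finset.mem_filter.mp hb).2⟩
        have hb1 := Finset.mem_filter.mp hb
        simp only [hS, Finset.mem_filter]
        refine ⟨hb1.1, ?_⟩
        rw [← hbs, hb1.2]
        rfl
      have hSne : S.Nonempty := by
        obtain ⟨x, hx, _⟩ := hattain y.1 ⟨y, by simp [hy]⟩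
        exact ⟨x, hx⟩
      have hlt := h S hSsub hrows hSne
      have hsum : ∑ x ∈ S, ((x.2 : ℕ) + 1) = (∑ x ∈ S, (x.2 : ℕ)) + S.card := by
        rw [Finset.sum_add_distrib]; simp
      have hle : ∑ x ∈ S, (x.2 : ℕ) ≤ n - 1 := by omega
      -- rewrite the global sum as the sum over S
      have hinj : ∀ a ∈ S, ∀ b ∈ S, a.1 = b.1 → a = b := by
        intro a ha b hb hab
        by_contra hne
        exact hrows a ha b hb hne hab
      have h1 : ∑ i ∈ S.image Prod.fst, rowMax m n F i = ∑ x ∈ S, rowMax m n F x.1 :=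
        Finset.sum_image hinj
      have h2 : ∑ i : Fin m, rowMax m n F i = ∑ i ∈ S.image Prod.fst, rowMax m n F i := by
        refine (Finset.sum_subset (Finset.subset_univ _) ?_).symm
        intro i _ hi
        by_contra h0
        have : (F.filter (fun x => x.1 = i)).Nonempty := by
          rw [Finset.filter_nonempty_iff]
          by_contra hempty
          push_neg at hempty
          apply h0
          unfold rowMax
          rw [Finset.filter_false_of_mem (by intro x hx; exact hempty x hx)]
          simp
        obtain ⟨x, hx, hx1⟩ := hattain i this
        exact hi (Finset.mem_image.mpr ⟨x, hx, hx1⟩)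
      have h3 : ∑ x ∈ S, rowMax m n F x.1 = ∑ x ∈ S, (x.2 : ℕ) := by
        refine Finset.sum_congr rfl ?_
        intro x hx
        simp only [hS, Finset.mem_filter] at hx
        omega
      omega
  · intro h S hS hrows hne
    have hsum : ∑ x ∈ S, ((x.2 : ℕ) + 1) = (∑ x ∈ S, (x.2 : ℕ)) + S.card := by
      rw [Finset.sum_add_distrib]; simp
    have hinj : ∀ a ∈ S, ∀ b ∈ S, a.1 = b.1 → a = b := by
      intro a ha b hb hab
      by_contra hne'
      exact hrows a ha b hb hne' hab
    have h1 : ∑ x ∈ S, (x.2 : ℕ) ≤ ∑ x ∈ S, rowMax m n F x.1 :=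
      Finset.sum_le_sum (fun x hx => le_rowMax (hS hx))
    have h2 : ∑ x ∈ S, rowMax m n F x.1 = ∑ i ∈ S.image Prod.fst, rowMax m n F i :=
      (Finset.sum_image hinj).symm
    have h3 : ∑ i ∈ S.image Prod.fst, rowMax m n F i ≤ ∑ i : Fin m, rowMax m n F i :=
      Finset.sum_le_sum_of_subset (Finset.subset_univ _)
    omega

lemma rowMax_FM {m n : ℕ} {M : Fin m → ℕ} (hM : ∀ i, M i < n) (i : Fin m) :
    rowMax m n (FM m n M) i = M i := by
  apply le_antisymm
  · apply Finset.sup_le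
    intro x hx
    rw [Finset.mem_filter, mem_FM] at hx
    rw [← hx.2]; exact hx.1
  · have : ((i, (⟨M i, hM i⟩ : Fin n)) : Fin m × Fin n) ∈ (FM m n M).filter (fun x => x.1 = i) := by
      rw [Finset.mem_filter, mem_FM]; exact ⟨le_refl _, rfl⟩
    exact Finset.le_sup (f := fun x => ((x.2 : ℕ))) this

lemma FM_face {m n : ℕ} (hn : 1 ≤ n) {M : Fin m → ℕ} (hM : ∑ i, M i ≤ n - 1) :
    IsFaceDJ m n (FM m n M) := by
  rw [face_iff m n hn]
  have hMi : ∀ i, M i < n := by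
    intro i
    have := Finset.single_le_sum (f := M) (fun i _ => Nat.zero_le _) (Finset.mem_univ i)
    omega
  calc ∑ i, rowMax m n (FM m n M) i = ∑ i, M i := by
        exact Finset.sum_congr rfl (fun i _ => rowMax_FM hMi i)
    _ ≤ n - 1 := hM

/-- Characterization of facets. -/
lemma facet_iff (m n : ℕ) (hm : 1 ≤ m) (hn : 1 ≤ n) (F : Finset (Fin m × Fin n)) :
    IsFacetDJ m n F ↔ ∃ M : Fin m → ℕ, ∑ i, M i = n - 1 ∧ F = FM m n M := by
  constructor
  · rintro ⟨hface, hmax⟩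
    set M : Fin m → ℕ := rowMax m n F with hMdef
    have hsum : ∑ i, M i ≤ n - 1 := (face_iff m n hn F).mp hface
    have hMi : ∀ i, M i < n := by
      intro i
      have := Finset.single_le_sum (f := M) (fun i _ => Nat.zero_le _) (Finset.mem_univ i)
      omega
    have hFsub : F ⊆ FM m n M := by
      intro x hx
      rw [mem_FM]
      exact le_rowMax hx
    rcases eq_or_lt_of_le hsum with heq | hlt
    · exact ⟨M, heq, hmax _ (FM_face hn hsum) hFsub⟩
    · exfalso
      set i₀ : Fin m := ⟨0, hm⟩
      set M' : Fin m → ℕ := Function.update M i₀ (M i₀ + 1) with hM'def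
      have hMle : ∀ i, M i ≤ M' i := by
        intro i
        rcases eq_or_ne i i₀ with rfl | hne
        · simp [hM'def]
        · simp [hM'def, Function.update_of_ne hne]
      have hsum' : ∑ i, M' i = (∑ i, M i) + 1 := by
        rw [hM'def, Finset.sum_update_of_mem (Finset.mem_univ i₀),
          Finset.sdiff_singleton_eq_erase, ← Finset.add_sum_erase _ M (Finset.mem_univ i₀)]
        ring
      have hsum'le : ∑ i, M' i ≤ n - 1 := by omega
      have hface' : IsFaceDJ m n (FM m n M') := FM_face hn hsum'le
      have hFsub' : F ⊆ FM m n M' := by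
        intro x hx
        rw [mem_FM]
        exact le_trans (le_rowMax hx) (hMle x.1)
      have hFeq := hmax _ hface' hFsub'
      have hM'i₀ : M' i₀ < n := by
        have := Finset.single_le_sum (f := M') (fun i _ => Nat.zero_le _) (Finset.mem_univ i₀)
        omega
      have hxmem : ((i₀, (⟨M' i₀, hM'i₀⟩ : Fin n)) : Fin m × Fin n) ∈ FM m n M' := by
        rw [mem_FM]
      rw [← hFeq] at hxmem
      have h5 : M' i₀ ≤ M i₀ := le_rowMax hxmem
      have h6 : M' i₀ = M i₀ + 1 := by simp [hM'def]
      omega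
  · rintro ⟨M, hsum, rfl⟩
    have hMi : ∀ i, M i < n := by
      intro i
      have := Finset.single_le_sum (f := M) (fun i _ => Nat.zero_le _) (Finset.mem_univ i)
      omega
    refine ⟨FM_face hn hsum.le, ?_⟩
    intro G hG hsub
    apply Finset.Subset.antisymm hsub
    intro x hx
    rw [mem_FM]
    by_contra hgt
    push_neg at hgt
    have hle : ∀ i, M i ≤ rowMax m n G i := by
      intro i
      rw [← rowMax_FM hMi i]
      exact rowMax_mono hsub i
    have hstrict : M x.1 < rowMax m n G x.1 := lt_of_lt_of_le hgt (le_rowMax hx)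
    have h1 : ∑ i, M i < ∑ i, rowMax m n G i :=
      Finset.sum_lt_sum (fun i _ => hle i) ⟨x.1, Finset.mem_univ _, hstrict⟩
    have h2 := (face_iff m n hn G).mp hG
    omega

/-- Subtype of a row: columns `≤ c`. -/
def colEquiv (n c : ℕ) (hc : c < n) : {j : Fin n // (j : ℕ) ≤ c} ≃ Fin (c + 1) where
  toFun j := ⟨j.1, Nat.lt_succ_of_le j.2⟩
  invFun k := ⟨⟨k.1, lt_of_le_of_lt (Nat.le_of_lt_succ k.2) hc⟩, Nat.le_of_lt_succ k.2⟩
  left_inv j := rfl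
  right_inv k := rfl

lemma card_FM {m n : ℕ} {M : Fin m → ℕ} (hM : ∀ i, M i < n) :
    (FM m n M).card = ∑ i, (M i + 1) := by
  have h1 : (FM m n M).card = Fintype.card {x : Fin m × Fin n // (x.2 : ℕ) ≤ M x.1} := by
    rw [Fintype.card_subtype]
    rfl
  rw [h1]
  have e : {x : Fin m × Fin n // (x.2 : ℕ) ≤ M x.1} ≃ Σ i : Fin m, {j : Fin n // (j : ℕ) ≤ M i} :=
    Equiv.subtypeProdEquivSigmaSubtype (fun i (j : Fin n) => (j : ℕ) ≤ M i)
  rw [Fintype.card_congr e, Fintype.card_sigma]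
  refine Finset.sum_congr rfl ?_
  intro i _
  rw [Fintype.card_congr (colEquiv n (M i) (hM i)), Fintype.card_fin]

/-- Facets correspond to tuples summing to `n - 1`. -/
noncomputable def facetEquiv (m n : ℕ) (hm : 1 ≤ m) (hn : 1 ≤ n) :
    {F : Finset (Fin m × Fin n) // IsFacetDJ m n F} ≃ {M : Fin m → ℕ // ∑ i, M i = n - 1} where
  toFun F := ⟨rowMax m n F.1, by
    obtain ⟨M, hsum, hFM⟩ := (facet_iff m n hm hn F.1).mp F.2
    have hMi : ∀ i, M i < n := by
      intro i
      have := Finset.single_le_sum (f := M) (fun i _ => Nat.zero_le _) (Finset.mem_univ i)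
      omega
    have : rowMax m n F.1 = M := by
      funext i; rw [hFM]; exact rowMax_FM hMi i
    rw [this]; exact hsum⟩
  invFun M := ⟨FM m n M.1, (facet_iff m n hm hn _).mpr ⟨M.1, M.2, rfl⟩⟩
  left_inv F := by
    obtain ⟨M, hsum, hFM⟩ := (facet_iff m n hm hn F.1).mp F.2
    have hMi : ∀ i, M i < n := by
      intro i
      have := Finset.single_le_sum (f := M) (fun i _ => Nat.zero_le _) (Finset.mem_univ i)
      omega
    have hr : rowMax m n F.1 = M := by
      funext i; rw [hFM]; exact rowMax_FM hMi i
    apply Subtype.ext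
    simp only [hr, ← hFM]
  right_inv M := by
    have hMi : ∀ i, M.1 i < n := by
      intro i
      have h1 := Finset.single_le_sum (f := M.1) (fun i _ => Nat.zero_le _) (Finset.mem_univ i)
      have := M.2
      omega
    apply Subtype.ext
    funext i
    exact rowMax_FM hMi i

/-- every facet of `Δ(J)` has cardinality `n + m − 1` (so `Δ(J)`
is pure of dimension `n + m − 2`), and there are exactly `C(m+n−2, m−1)`
facets. -/
theorem stmt9 (m n : ℕ) (hm : 1 ≤ m) (hn : 1 ≤ n) :
    (∀ F : Finset (Fin m × Fin n), IsFacetDJ m n F → F.card = n + m - 1) ∧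
    Nat.card {F : Finset (Fin m × Fin n) // IsFacetDJ m n F} =
      Nat.choose (m + n - 2) (m - 1) := by
  constructor
  · intro F hF
    obtain ⟨M, hsum, rfl⟩ := (facet_iff m n hm hn F).mp hF
    have hMi : ∀ i, M i < n := by
      intro i
      have := Finset.single_le_sum (f := M) (fun i _ => Nat.zero_le _) (Finset.mem_univ i)
      omega
    rw [card_FM hMi, Finset.sum_add_distrib, hsum]
    simp [Finset.card_univ]
    omega
  · rw [Nat.card_congr (facetEquiv m n hm hn),
      Nat.card_congr (Sym.equivNatSumOfFintype (Fin m) (n - 1)).symm,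
      Nat.card_eq_fintype_card, Sym.card_sym_eq_choose, Fintype.card_fin]
    rw [show m - 1 = (m + n - 2) - (n - 1) by omega, Nat.choose_symm (by omega)]
    congr 1
    omega
end

section
/- Let F be a subset of the set of pairs {(i,j) : 1 ≤ i ≤ m, 1 ≤ j ≤ n} such that for every choice of pairs (i_1,j_1),...,(i_k,j_k) ∈ F with i_1 < ... < i_k one has j_1 + ... + j_k < n + k. Then there exists p ∈ {1,...,n}^m with ∑_i p_i = n + m − 1 such that F ⊆ {(i,j) : j ≤ p_i}. -/
open Finset

theorem aux_fill {ι : Type*} [Fintype ι] (s : ι → ℕ) (D : ℕ) (hD : D ≤ ∑ i, s i) :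
    ∃ r : ι → ℕ, (∀ i, r i ≤ s i) ∧ ∑ i, r i = D := by
  classical
  induction D with
  | zero => exact ⟨fun _ => 0, fun i => Nat.zero_le _, by simp⟩
  | succ D ih =>
    obtain ⟨r, hr, hsum⟩ := ih (Nat.le_of_succ_le hD)
    have hlt : ∑ i, r i < ∑ i, s i := by omega
    have : ∃ i, r i < s i := by
      by_contra h
      push_neg at h
      exact absurd (Finset.sum_le_sum fun i _ => h i) (not_le.2 hlt)
    obtain ⟨i, hi⟩ := this
    refine ⟨Function.update r i (r i + 1), ?_, ?_⟩
    · intro j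
      rcases eq_or_ne j i with rfl | hj
      · simpa using hi
      · simpa [Function.update_of_ne hj] using hr j
    · rw [Finset.sum_update_of_mem (Finset.mem_univ i)]
      rw [← Finset.add_sum_erase _ r (Finset.mem_univ i)] at hsum
      have : Finset.univ \ {i} = (Finset.univ : Finset ι).erase i := by
        ext; simp [Finset.mem_erase, and_comm]
      rw [this]
      omega

/-- if `F` is a set of pairs `(i,j)` with `1 ≤ i ≤ m`,
`1 ≤ j ≤ n` (modelled as `(i,j) ∈ Fin m × Fin n`, `j : Fin n` standing for
`j+1`) such that every nonempty selection of pairs of `F` with strictly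
increasing (i.e. pairwise distinct) first coordinates `i₁ < ⋯ < iₖ` satisfies
`j₁ + ⋯ + jₖ < n + k`, then there exists `p ∈ {1,…,n}^m` with
`∑ pᵢ = n + m − 1` and `F ⊆ {(i,j) : j ≤ pᵢ}`. -/
theorem stmt10 (m n : ℕ) (hm : 1 ≤ m) (hn : 1 ≤ n) (F : Finset (Fin m × Fin n))
    (hF : ∀ S ⊆ F, (∀ a ∈ S, ∀ b ∈ S, a ≠ b → a.1 ≠ b.1) → S.Nonempty →
      ∑ x ∈ S, ((x.2 : ℕ) + 1) < n + S.card) :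
    ∃ p : Fin m → ℕ, (∀ i, 1 ≤ p i ∧ p i ≤ n) ∧ (∑ i, p i = n + m - 1) ∧
      ∀ x ∈ F, (x.2 : ℕ) + 1 ≤ p x.1 := by
  classical
  set q : Fin m → ℕ := fun i => max 1 ((F.filter (fun x => x.1 = i)).sup (fun x => (x.2 : ℕ) + 1))
    with hqdef
  have hq1 : ∀ i, 1 ≤ q i := fun i => le_max_left _ _
  have hqn : ∀ i, q i ≤ n := by
    intro i
    refine max_le hn (Finset.sup_le fun x hx => x.2.2)
  have hqF : ∀ x ∈ F, (x.2 : ℕ) + 1 ≤ q x.1 := by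
    intro x hx
    apply le_max_of_le_right
    have hxmem : x ∈ F.filter (fun y => y.1 = x.1) := Finset.mem_filter.2 ⟨hx, rfl⟩
    exact Finset.le_sup (f := fun y : Fin m × Fin n => (y.2 : ℕ) + 1) hxmem
  -- the set of row-maximal elements
  set S : Finset (Fin m × Fin n) := F.filter (fun x => ∀ y ∈ F, y.1 = x.1 → y.2 ≤ x.2) with hSdef
  have hSF : S ⊆ F := Finset.filter_subset _ _
  have hSinj : ∀ a ∈ S, ∀ b ∈ S, a.1 = b.1 → a = b := by
    intro a ha b hb hab
    rw [hSdef, Finset.mem_filter] at ha hb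
    have h1 : a.2 ≤ b.2 := hb.2 a ha.1 hab
    have h2 : b.2 ≤ a.2 := ha.2 b hb.1 hab.symm
    have : a.2 = b.2 := le_antisymm h1 h2
    exact Prod.ext hab this
  set T : Finset (Fin m) := S.image Prod.fst with hTdef
  have hcard : T.card = S.card := by
    apply Finset.card_image_of_injOn
    intro a ha b hb hab
    exact hSinj a ha b hb hab
  have hqS : ∀ x ∈ S, q x.1 = (x.2 : ℕ) + 1 := by
    intro x hx
    rw [hSdef, Finset.mem_filter] at hx
    refine le_antisymm ?_ (hqF x hx.1)
    refine max_le (by omega) (Finset.sup_le fun y hy => ?_)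
    rw [Finset.mem_filter] at hy
    have h2 : (y.2 : ℕ) ≤ (x.2 : ℕ) := hx.2 y hy.1 hy.2
    omega
  have hqT : ∀ i ∉ T, q i = 1 := by
    intro i hi
    have hempty : F.filter (fun x => x.1 = i) = ∅ := by
      by_contra h
      obtain ⟨x, hx, hmax⟩ := Finset.exists_max_image (F.filter (fun x => x.1 = i))
        (fun x => x.2) (Finset.nonempty_of_ne_empty h)
      rw [Finset.mem_filter] at hx
      apply hi
      rw [hTdef, Finset.mem_image]
      refine ⟨x, ?_, hx.2⟩
      rw [hSdef, Finset.mem_filter]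
      refine ⟨hx.1, fun y hy hyx => hmax y ?_⟩
      rw [Finset.mem_filter]
      exact ⟨hy, by rw [hyx, hx.2]⟩
    show max 1 ((F.filter (fun x => x.1 = i)).sup (fun x => (x.2 : ℕ) + 1)) = 1
    rw [hempty, Finset.sup_empty]
    exact max_eq_left (Nat.zero_le 1)
  have hsumT : ∑ i ∈ T, q i = ∑ x ∈ S, ((x.2 : ℕ) + 1) := by
    rw [hTdef, Finset.sum_image (fun a ha b hb hab => hSinj a ha b hb hab)]
    exact Finset.sum_congr rfl hqS
  have hsplit : ∑ i, q i = ∑ i ∈ T, q i + (m - T.card) := by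
    rw [← Finset.sum_add_sum_compl T q]
    have : ∑ i ∈ Tᶜ, q i = ∑ i ∈ Tᶜ, 1 :=
      Finset.sum_congr rfl fun i hi => hqT i (Finset.mem_compl.1 hi)
    rw [this, Finset.sum_const, smul_eq_mul, mul_one, Finset.card_compl]
    simp
  have hcardm : T.card ≤ m := by
    simpa using Finset.card_le_card (Finset.subset_univ T)
  have hsumq : ∑ i, q i ≤ n + m - 1 := by
    rcases S.eq_empty_or_nonempty with hS | hS
    · have hT : T = ∅ := by rw [hTdef, hS]; simp
      rw [hsplit, hT]
      simp
      omega
    · have key := hF S hSF (fun a ha b hb hab => fun h => hab (hSinj a ha b hb h)) hS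
      rw [hsplit, hsumT, hcard]
      have := hS.card_pos
      omega
  -- padding
  have hpad : ∀ i, q i + (n - q i) = n := fun i => by have := hqn i; omega
  have hsums : ∑ i, q i + ∑ i, (n - q i) = m * n := by
    rw [← Finset.sum_add_distrib]
    rw [Finset.sum_congr rfl fun i _ => hpad i]
    simp [mul_comm]
  have hmn : n + m - 1 ≤ m * n := by
    have h : n + m ≤ m * n + 1 := by nlinarith
    omega
  have hD : (n + m - 1) - ∑ i, q i ≤ ∑ i, (n - q i) := by omega
  obtain ⟨r, hr, hrsum⟩ := aux_fill (fun i => n - q i) _ hD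
  refine ⟨fun i => q i + r i, fun i => ?_, ?_, fun x hx => ?_⟩
  · constructor
    · have h1 := hq1 i
      show 1 ≤ q i + r i
      omega
    · have h1 := hr i
      have h2 := hqn i
      show q i + r i ≤ n
      omega
  · show ∑ i, (q i + r i) = n + m - 1
    rw [Finset.sum_add_distrib, hrsum]
    omega
  · show (x.2 : ℕ) + 1 ≤ q x.1 + r x.1
    exact le_trans (hqF x hx) (Nat.le_add_right _ _)
end

section
/- Let A be a normal domain and B ⊆ A a subring that is a direct summand of A as a B-module. Then B is integrally closed in its field of fractions (B is normal). -/
/-!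
If `p / q` in the fraction field of `B` is integral over `B`, its image in the fraction field
of `A` is integral over `A`, hence lies in `A`: so `q ∣ p` in `A`. Applying a `B`-linear
retraction `g : A → B` to `p = q * a` gives `p = q * g a`, so `p / q ∈ B`.
-/

open IsLocalization

theorem dvd_of_algebraMap_dvd_of_retraction {B A : Type*} [CommRing B] [CommRing A]
    [Algebra B A] (g : A →ₗ[B] B) (hg : ∀ b : B, g (algebraMap B A b) = b) {p q : B}
    (h : algebraMap B A q ∣ algebraMap B A p) : q ∣ p := by
  obtain ⟨a, ha⟩ := h
  exact ⟨g a, by rw [← hg p, ha, ← Algebra.smul_def, map_smul, smul_eq_mul]⟩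

theorem IsIntegrallyClosed.of_dvd_of_isIntegral_mk' {B : Type*} [CommRing B] [IsDomain B]
    (K : Type*) [Field K] [Algebra B K] [IsFractionRing B K]
    (h : ∀ (p : B) (q : nonZeroDivisors B), IsIntegral B (mk' K p q) → (q : B) ∣ p) :
    IsIntegrallyClosed B := by
  refine (isIntegrallyClosed_iff K).mpr fun {x} hx => ?_
  obtain ⟨⟨p, q⟩, rfl⟩ := mk'_surjective (nonZeroDivisors B) x
  obtain ⟨b, rfl⟩ := h p q hx
  exact ⟨b, (mk'_mul_cancel_left b q).symm⟩

theorem algebraMap_dvd_of_isIntegral_mk' {B A K : Type*} [CommRing B] [CommRing A] [IsDomain A]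
    [IsIntegrallyClosed A] [Algebra B A] [Field K] [Algebra B K] [IsFractionRing B K]
    (hinj : Function.Injective (algebraMap B A))
    {p : B} {q : nonZeroDivisors B} (hx : IsIntegral B (mk' K p q)) :
    algebraMap B A q ∣ algebraMap B A p := by
  let L := FractionRing A
  have hinjL : Function.Injective (Algebra.ofId B L) := by
    change Function.Injective (algebraMap B L)
    rw [IsScalarTower.algebraMap_eq B A L]
    exact (IsFractionRing.injective A L).comp hinj
  let φ := IsFractionRing.liftAlgHom (K := K) hinjL
  obtain ⟨a, ha⟩ := IsIntegrallyClosed.isIntegral_iff.mp ((hx.map φ).tower_top (A := A))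
  refine ⟨a, IsFractionRing.injective A L ?_⟩
  have hφ : ∀ b : B, φ (algebraMap B K b) = algebraMap A L (algebraMap B A b) :=
    fun b => by rw [AlgHom.commutes, IsScalarTower.algebraMap_apply B A L]
  rw [map_mul, ha, ← hφ, ← hφ, ← map_mul, mul_comm, mk'_spec]

/-- if `A` is a normal domain and `B ⊆ A` is a subring which is
a direct summand of `A` as a `B`-module (the inclusion splits `B`-linearly),
then `B` is normal, i.e. integrally closed in its fraction field. -/
theorem stmt13 {B A : Type*} [CommRing B] [CommRing A] [IsDomain A]
    [IsIntegrallyClosed A] [Algebra B A]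
    (hinj : Function.Injective (algebraMap B A))
    (hsplit : ∃ g : A →ₗ[B] B, ∀ b : B, g (algebraMap B A b) = b) :
    IsIntegrallyClosed B := by
  obtain ⟨g, hg⟩ := hsplit
  have : IsDomain B := hinj.isDomain (algebraMap B A)
  exact .of_dvd_of_isIntegral_mk' (FractionRing B) fun p q hx =>
    dvd_of_algebraMap_dvd_of_retraction g hg (algebraMap_dvd_of_isIntegral_mk' hinj hx)
end

section
/- Let C = C_1 × ... × C_m where each C_i is a nonempty finite subset of {1,...,n}, and let B ⊆ ℕ^n be the set of vectors ∑_{k=1}^m e_{j_k} with j_k ∈ C_k. Then B is the base set of a discrete polymatroid: for all v, w ∈ B, ∑_i v_i = ∑_i w_i, and whenever v_i > w_i there exists j with v_j < w_j and v + e_j − e_i ∈ B. -/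
open Finset

/-- The `j`-th standard basis vector of `ℕⁿ`. -/
def eVec {n : ℕ} (j : Fin n) : Fin n → ℕ := fun a => if a = j then 1 else 0

/-- The base set `B` of the transversal polymatroid associated with
`C₁,…,C_m ⊆ {1,…,n}`: all vectors `∑ₖ e_{jₖ}` with `jₖ ∈ Cₖ`. -/
def transversalBase {m n : ℕ} (C : Fin m → Finset (Fin n)) : Set (Fin n → ℕ) :=
  { v | ∃ j : Fin m → Fin n, (∀ k, j k ∈ C k) ∧ v = ∑ k, eVec (j k) }

/-!
For an assignment `j` with `jₖ ∈ Cₖ` write `v = ∑ₖ e_{jₖ}`. If `vᵢ > wᵢ`, some `k` has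
`jₖ = i ≠ j'ₖ`; reassigning `k` to `l₀ = j'ₖ` gives `v + e_{l₀} − e_i ∈ B`. If that overfills
`l₀`, repeat from `l₀` with the new assignment, which is strictly closer to `j'` in Hamming
distance. The exchange is phrased additively, `u + e_i = v + e_l`, so that the steps compose
without truncated subtraction.
-/

section

variable {m n : ℕ}

lemma eVec_self (x : Fin n) : eVec x x = 1 := if_pos rfl

lemma eVec_of_ne {x a : Fin n} (h : a ≠ x) : eVec x a = 0 := if_neg h

lemma sum_eVec (x : Fin n) : ∑ a, eVec x a = 1 := by
  simp [eVec]

lemma sum_eVec_apply (j : Fin m → Fin n) (a : Fin n) :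
    (∑ k, eVec (j k)) a = #{k | j k = a} := by
  simp [Finset.sum_apply, eVec, Finset.sum_boole, eq_comm]

lemma sum_sum_eVec_apply (j : Fin m → Fin n) : ∑ a, (∑ k, eVec (j k)) a = m := by
  simp only [Finset.sum_apply]
  rw [Finset.sum_comm]
  simp [sum_eVec]

lemma sum_eVec_update_add (j : Fin m → Fin n) (k : Fin m) (x : Fin n) :
    ∑ t, eVec (Function.update j k x t) + eVec (j k) = ∑ t, eVec (j t) + eVec x := by
  have hupdate : ∀ t, eVec (Function.update j k x t) = Function.update (eVec ∘ j) k (eVec x) t :=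
    fun t => congrFun (Function.comp_update eVec j k x) t
  simp only [hupdate, Finset.sum_update_of_mem (Finset.mem_univ k)]
  rw [← Finset.sum_erase_add _ _ (Finset.mem_univ k), Finset.sdiff_singleton_eq_erase]
  simp only [Function.comp_apply]
  abel

lemma hammingDist_update_lt {ι β : Type*} [Fintype ι] [DecidableEq ι] [DecidableEq β]
    {j j' : ι → β} {k : ι} (hk : j k ≠ j' k) :
    hammingDist (Function.update j k (j' k)) j' < hammingDist j j' := by
  apply Finset.card_lt_card
  refine Finset.ssubset_iff_of_subset (fun t ht => ?_) |>.2 ⟨k, by simpa using hk, by simp⟩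
  rcases eq_or_ne t k with rfl | htk
  · simp at ht
  · simpa [Function.update_of_ne htk] using ht

theorem exists_exchange (C : Fin m → Finset (Fin n)) {j j' : Fin m → Fin n}
    (hj : ∀ k, j k ∈ C k) (hj' : ∀ k, j' k ∈ C k) {i : Fin n}
    (hi : (∑ k, eVec (j' k)) i < (∑ k, eVec (j k)) i) :
    ∃ l, (∑ k, eVec (j k)) l < (∑ k, eVec (j' k)) l ∧
      ∃ u ∈ transversalBase C, u + eVec i = ∑ k, eVec (j k) + eVec l := by
  obtain ⟨k, hki, hk'i⟩ : ∃ k, j k = i ∧ j' k ≠ i := by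
    rw [sum_eVec_apply, sum_eVec_apply] at hi
    obtain ⟨k, hk, hk'⟩ := exists_mem_notMem_of_card_lt_card hi
    exact ⟨k, by simpa using hk, by simpa using hk'⟩
  set v := ∑ k, eVec (j k)
  set w := ∑ k, eVec (j' k)
  set l₀ := j' k
  set j₁ := Function.update j k l₀
  set v₁ := ∑ t, eVec (j₁ t)
  have hj₁ : ∀ t, j₁ t ∈ C t := Function.forall_update_iff j (p := fun t x => x ∈ C t) |>.2
    ⟨hj' k, fun t _ => hj t⟩
  have hv₁ : v₁ + eVec i = v + eVec l₀ := hki ▸ sum_eVec_update_add j k l₀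
  by_cases hl₀ : v l₀ < w l₀
  · exact ⟨l₀, hl₀, v₁, ⟨j₁, hj₁, rfl⟩, hv₁⟩
  have hv₁l₀ : w l₀ < v₁ l₀ := by
    have := congrFun hv₁ l₀
    simp only [Pi.add_apply, eVec_self, eVec_of_ne hk'i] at this
    omega
  obtain ⟨l, hl, u, hu, hu_eq⟩ := exists_exchange C hj₁ hj' hv₁l₀
  change v₁ l < w l at hl
  change u + eVec l₀ = v₁ + eVec l at hu_eq
  have hll₀ : l ≠ l₀ := by rintro rfl; omega
  have hli : l ≠ i := by
    rintro rfl
    have := congrFun hv₁ l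
    simp only [Pi.add_apply, eVec_self, eVec_of_ne hk'i.symm] at this
    omega
  refine ⟨l, ?_, u, hu, add_right_cancel (b := eVec l₀) ?_⟩
  · have := congrFun hv₁ l
    simp only [Pi.add_apply, eVec_of_ne hli, eVec_of_ne hll₀] at this
    omega
  · calc u + eVec i + eVec l₀ = u + eVec l₀ + eVec i := add_right_comm _ _ _
      _ = v₁ + eVec i + eVec l := by rw [hu_eq, add_right_comm]
      _ = v + eVec l + eVec l₀ := by rw [hv₁, add_right_comm]
termination_by hammingDist j j'
decreasing_by exact hammingDist_update_lt (hki ▸ hk'i.symm)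

end

theorem stmt14_general {m n : ℕ} (C : Fin m → Finset (Fin n))
    (v w : Fin n → ℕ)
    (hv : v ∈ transversalBase C) (hw : w ∈ transversalBase C) :
    (∑ a, v a = ∑ a, w a) ∧
    ∀ i, w i < v i → ∃ l, v l < w l ∧
      (fun a => v a + eVec l a - eVec i a) ∈ transversalBase C := by
  obtain ⟨j, hj, rfl⟩ := hv
  obtain ⟨j', hj', rfl⟩ := hw
  refine ⟨by rw [sum_sum_eVec_apply, sum_sum_eVec_apply], fun i hi => ?_⟩
  obtain ⟨l, hl, u, hu, hu_eq⟩ := exists_exchange C hj hj' hi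
  refine ⟨l, hl, ?_⟩
  convert hu using 1
  funext a
  have := congrFun hu_eq a
  simp only [Pi.add_apply] at this
  omega

/-- the set `B` of vectors `∑ₖ e_{jₖ}`, `jₖ ∈ Cₖ`, is the base
set of a discrete polymatroid: all elements have the same coordinate sum, and
for `v, w ∈ B` and `i` with `vᵢ > wᵢ` there is `l` with `v_l < w_l` and
`v + e_l − e_i ∈ B`. -/
theorem stmt14 {m n : ℕ} (C : Fin m → Finset (Fin n))
    (hC : ∀ k, (C k).Nonempty) (v w : Fin n → ℕ)
    (hv : v ∈ transversalBase C) (hw : w ∈ transversalBase C) :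
    (∑ a, v a = ∑ a, w a) ∧
    ∀ i, w i < v i → ∃ l, v l < w l ∧
      (fun a => v a + eVec l a - eVec i a) ∈ transversalBase C :=
  stmt14_general C v w hv hw
end

section
/- Let H be a finite poset, K a field, and A = K[H]/I a homogeneous ASL on H. Then for any revlex term order τ on K[H] extending a linear extension of the order on H, the straightening relations in (ASL2) form a Gröbner basis of I, and in_τ(I) = J_H, the ideal generated by products xy of incomparable elements x, y ∈ H. -/
/-!
Revlex is a well-order on the monomials in the finite set of variables `H`: only finitely many lie
below a given one. The leading monomial of the straightening relation of `x, y` is `xy`, since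
every other term `zt` contains the variable `z < x, y`, which is smaller in the linear extension.
Hence a non-standard monomial is congruent modulo `I` to a combination of strictly smaller
monomials. If some `f ∈ I` had a standard leading monomial, straightening its non-standard
monomials from the top down would leave a nonzero element of `I` all of whose monomials are
standard, contradicting (ASL1). So every leading monomial of an element of `I` is divisible by
the product `xy` of two incomparable elements, which is itself the leading monomial of a
straightening relation.
-/

open MvPolynomial

attribute [local instance] MvPolynomial.gradedAlgebra

/-- Total degree of a monomial exponent vector. -/
def mdeg {H : Type*} (μ : H →₀ ℕ) : ℕ := μ.sum fun _ e => e

/-- The (degree) reverse lexicographic order on monomials induced by the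
variable order `σ` (larger `σ`-value = larger variable): `μ < ν` iff
`deg μ < deg ν`, or the degrees agree and `μ` has the strictly larger exponent
at the `σ`-smallest variable where `μ` and `ν` differ. -/
def RevLexLT {H : Type*} (σ : H → ℕ) (μ ν : H →₀ ℕ) : Prop :=
  mdeg μ < mdeg ν ∨ (mdeg μ = mdeg ν ∧
    ∃ h, ν h < μ h ∧ ∀ h', σ h' < σ h → μ h' = ν h')

/-- `μ` is the leading (initial) monomial of `f` for the revlex order given by `σ`. -/
def IsLeadMon {K H : Type*} [Field K] (σ : H → ℕ) (f : MvPolynomial H K)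
    (μ : H →₀ ℕ) : Prop :=
  μ ∈ f.support ∧ ∀ ν ∈ f.support, ν ≠ μ → RevLexLT σ ν μ

/-- The initial ideal `in_τ(I)`, generated by the leading monomials of the
nonzero elements of `I`. -/
noncomputable def initialIdeal {K H : Type*} [Field K] (σ : H → ℕ)
    (I : Ideal (MvPolynomial H K)) : Ideal (MvPolynomial H K) :=
  Ideal.span { p | ∃ f ∈ I, ∃ μ, IsLeadMon σ f μ ∧ p = monomial μ (1 : K) }

/-- The monomial ideal `J_H` generated by the products `xy` of incomparable
elements `x, y ∈ H`. -/
noncomputable def JHIdeal (K H : Type*) [Field K] [PartialOrder H] : Ideal (MvPolynomial H K) :=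
  Ideal.span { p | ∃ x y : H, ¬ x ≤ y ∧ ¬ y ≤ x ∧ p = X x * X y }

/-- `σ : H → ℕ` encodes a linear extension of the partial order on `H`. -/
def IsLinExt {H : Type*} [PartialOrder H] (σ : H → ℕ) : Prop :=
  Function.Injective σ ∧ ∀ u v : H, u < v → σ u < σ v

/-- A monomial is standard if its support is a chain of `H`. -/
def IsStdMon {H : Type*} [PartialOrder H] (μ : H →₀ ℕ) : Prop :=
  ∀ x ∈ μ.support, ∀ y ∈ μ.support, x ≤ y ∨ y ≤ x

lemma mdeg_eq_degree {H : Type*} (μ : H →₀ ℕ) : mdeg μ = μ.degree := rfl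

namespace RevLexLT

variable {H : Type*} {σ : H → ℕ}

lemma irrefl (μ : H →₀ ℕ) : ¬ RevLexLT σ μ μ := by
  rintro (h | ⟨-, _, h, -⟩) <;> exact lt_irrefl _ h

lemma mdeg_le {μ ν : H →₀ ℕ} (h : RevLexLT σ μ ν) : mdeg μ ≤ mdeg ν := by
  rcases h with h | ⟨h, -⟩
  exacts [h.le, h.le]

lemma trans (hσ : Function.Injective σ) {μ ν ρ : H →₀ ℕ}
    (h₁ : RevLexLT σ μ ν) (h₂ : RevLexLT σ ν ρ) : RevLexLT σ μ ρ := by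
  rcases h₁ with h₁ | ⟨d₁, a, ha, hbelow_a⟩
  · exact Or.inl (h₁.trans_le h₂.mdeg_le)
  rcases h₂ with h₂ | ⟨d₂, b, hb, hbelow_b⟩
  · exact Or.inl (d₁ ▸ h₂)
  refine Or.inr ⟨d₁.trans d₂, ?_⟩
  rcases lt_trichotomy (σ a) (σ b) with hab | hab | hab
  · exact ⟨a, hbelow_b a hab ▸ ha,
      fun h hh => (hbelow_a h hh).trans (hbelow_b h (hh.trans hab))⟩
  · obtain rfl := hσ hab
    exact ⟨a, hb.trans ha, fun h hh => (hbelow_a h hh).trans (hbelow_b h hh)⟩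
  · exact ⟨b, hbelow_a b hab ▸ hb,
      fun h hh => (hbelow_a h (hh.trans hab)).trans (hbelow_b h hh)⟩

lemma trichotomy_of_ne {μ ν : H →₀ ℕ} (hne : μ ≠ ν) :
    RevLexLT σ μ ν ∨ RevLexLT σ ν μ := by
  classical
  rcases lt_trichotomy (mdeg μ) (mdeg ν) with hd | hd | hd
  · exact Or.inl (Or.inl hd)
  swap
  · exact Or.inr (Or.inl hd)
  obtain ⟨a, ha, hmin⟩ :=
    Finset.exists_min_image _ σ (Finsupp.nonempty_neLocus_iff.mpr hne)
  have hbelow : ∀ h, σ h < σ a → μ h = ν h := fun h hh => by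
    by_contra hne
    exact (hmin h (Finsupp.mem_neLocus.mpr hne)).not_gt hh
  rcases (Finsupp.mem_neLocus.mp ha).lt_or_gt with hlt | hlt
  · exact Or.inr (Or.inr ⟨hd.symm, a, hlt, fun h hh => (hbelow h hh).symm⟩)
  · exact Or.inl (Or.inr ⟨hd, a, hlt, hbelow⟩)

lemma add_left (δ : H →₀ ℕ) {μ ν : H →₀ ℕ} (h : RevLexLT σ μ ν) :
    RevLexLT σ (δ + μ) (δ + ν) := by
  simp only [RevLexLT, mdeg_eq_degree, map_add, Finsupp.add_apply] at h ⊢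
  rcases h with h | ⟨hd, a, ha, hbelow⟩
  · exact Or.inl (by omega)
  · exact Or.inr ⟨by omega, a, by omega, fun h hh => by rw [hbelow h hh]⟩

lemma finite_setOf_lt [Finite H] (ν : H →₀ ℕ) : {μ | RevLexLT σ μ ν}.Finite :=
  (Finsupp.finite_of_degree_le (mdeg ν)).subset fun _ h => h.mdeg_le

end RevLexLT

noncomputable def revLexRank {H : Type*} (σ : H → ℕ) (μ : H →₀ ℕ) : ℕ :=
  {ν | RevLexLT σ ν μ}.ncard

section revLexRank

variable {H : Type*} [Finite H] {σ : H → ℕ}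

lemma revLexRank_lt_revLexRank (hσ : Function.Injective σ) {μ ν : H →₀ ℕ}
    (h : RevLexLT σ μ ν) : revLexRank σ μ < revLexRank σ ν :=
  Set.ncard_lt_ncard ⟨fun _ hρ => RevLexLT.trans hσ hρ h, fun hsub => RevLexLT.irrefl μ (hsub h)⟩
    (RevLexLT.finite_setOf_lt ν)

lemma revLexRank_injective (hσ : Function.Injective σ) : Function.Injective (revLexRank σ) := by
  intro μ ν h
  by_contra hne
  rcases RevLexLT.trichotomy_of_ne hne with h' | h' <;>
    exact (revLexRank_lt_revLexRank hσ h').ne (by rw [h])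

end revLexRank

lemma eq_zero_of_mem_of_forall_isStdMon {K H : Type*} [Field K] [PartialOrder H]
    {I : Ideal (MvPolynomial H K)} (hASL1 : LinearIndependent K
      (fun μ : {μ : H →₀ ℕ // IsStdMon μ} => Ideal.Quotient.mk I (monomial μ.1 (1 : K))))
    {f : MvPolynomial H K} (hf : f ∈ I) (hstd : ∀ μ ∈ f.support, IsStdMon μ) : f = 0 := by
  classical
  have hcoeff := (Finsupp.subtypeDomain_eq_zero_iff (p := IsStdMon) hstd).mp
    (linearIndependent_iff.mp hASL1 _ ?_)
  · ext μ
    exact DFunLike.congr_fun hcoeff μ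
  rw [Finsupp.linearCombination_apply, Finsupp.sum_subtypeDomain_index
    (h := fun μ c => c • Ideal.Quotient.mk I (monomial μ 1)) hstd,
    ← Ideal.Quotient.eq_zero_iff_mem.mpr hf]
  conv_rhs => rw [f.as_sum, map_sum]
  refine Finset.sum_congr rfl fun μ _ => ?_
  rw [← Ideal.Quotient.mkₐ_eq_mk K]
  dsimp only
  rw [← map_smul, smul_monomial, smul_eq_mul, mul_one]
  rfl

lemma X_mul_X_eq_monomial {K H : Type*} [Field K] (x y : H) :
    (X x * X y : MvPolynomial H K) = monomial (Finsupp.single x 1 + Finsupp.single y 1) 1 := by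
  rw [X, X, monomial_mul, one_mul]

lemma IsLeadMon.unique {K H : Type*} [Field K] {σ : H → ℕ} (hσ : Function.Injective σ)
    {f : MvPolynomial H K} {μ ν : H →₀ ℕ} (hμ : IsLeadMon σ f μ) (hν : IsLeadMon σ f ν) :
    μ = ν := by
  by_contra hne
  exact RevLexLT.irrefl _ (RevLexLT.trans hσ (hμ.2 ν hν.1 (Ne.symm hne)) (hν.2 μ hμ.1 hne))

section Straightening

variable {K H : Type*} [Field K] [PartialOrder H] {σ : H → ℕ}

lemma revLexLT_single_add_single (hσ : IsLinExt σ) {x y z t : H}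
    (hzt : z ≤ t) (hzx : z < x) (hzy : z < y) :
    RevLexLT σ (Finsupp.single z 1 + Finsupp.single t 1)
      (Finsupp.single x 1 + Finsupp.single y 1) := by
  refine Or.inr ⟨by simp [mdeg_eq_degree], z, by simp [hzx.ne', hzy.ne'], fun h hh => ?_⟩
  have hσzt : σ z ≤ σ t := hzt.eq_or_lt.elim (fun h => h ▸ le_rfl) fun h => (hσ.2 _ _ h).le
  have hσzx := hσ.2 _ _ hzx
  have hσzy := hσ.2 _ _ hzy
  simp [ne_of_apply_ne σ (by omega : σ z ≠ σ h), ne_of_apply_ne σ (by omega : σ t ≠ σ h),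
    ne_of_apply_ne σ (by omega : σ x ≠ σ h), ne_of_apply_ne σ (by omega : σ y ≠ σ h)]

lemma isLeadMon_of_eq_X_mul_X_sub (hσ : IsLinExt σ) {x y : H} {s : Finset (H × H)}
    {c : H × H → K} (hs : ∀ p ∈ s, p.1 ≤ p.2 ∧ p.1 < x ∧ p.1 < y) {f : MvPolynomial H K}
    (hf : f = X x * X y - ∑ p ∈ s, c p • (X p.1 * X p.2)) :
    coeff (Finsupp.single x 1 + Finsupp.single y 1) f = 1 ∧
      IsLeadMon σ f (Finsupp.single x 1 + Finsupp.single y 1) := by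
  classical
  have hlt : ∀ p ∈ s, RevLexLT σ (Finsupp.single p.1 1 + Finsupp.single p.2 1)
      (Finsupp.single x 1 + Finsupp.single y 1) := fun p hp =>
    revLexLT_single_add_single hσ (hs p hp).1 (hs p hp).2.1 (hs p hp).2.2
  simp only [X_mul_X_eq_monomial, smul_monomial, smul_eq_mul, mul_one] at hf
  have hcoeff : coeff (Finsupp.single x 1 + Finsupp.single y 1) f = 1 := by
    rw [hf, coeff_sub, coeff_sum, coeff_monomial, if_pos rfl, sub_eq_self]
    exact Finset.sum_eq_zero fun p hp => by
      rw [coeff_monomial, if_neg fun h => RevLexLT.irrefl _ (h ▸ hlt p hp)]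
  refine ⟨hcoeff, mem_support_iff.mpr (hcoeff ▸ one_ne_zero), fun ν hν hne => ?_⟩
  rw [hf] at hν
  rcases Finset.mem_union.mp (support_sub _ _ _ hν) with hν | hν
  · exact absurd (Finset.mem_singleton.mp (support_monomial_subset hν)) hne
  · obtain ⟨p, hp, hνp⟩ := Finset.mem_biUnion.mp (support_sum hν)
    exact Finset.mem_singleton.mp (support_monomial_subset hνp) ▸ hlt p hp

end Straightening

section Reduction

variable {K H : Type*} [Field K] [PartialOrder H] {σ : H → ℕ} {I : Ideal (MvPolynomial H K)}

lemma exists_single_add_single_le_of_not_isStdMon {μ : H →₀ ℕ} (hμ : ¬ IsStdMon μ) :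
    ∃ x y : H, ¬ x ≤ y ∧ ¬ y ≤ x ∧ Finsupp.single x 1 + Finsupp.single y 1 ≤ μ := by
  classical
  simp only [IsStdMon, not_forall, not_or] at hμ
  obtain ⟨x, hx, y, hy, hxy, hyx⟩ := hμ
  rw [Finsupp.mem_support_iff] at hx hy
  refine ⟨x, y, hxy, hyx, fun h => ?_⟩
  simp only [Finsupp.coe_add, Pi.add_apply, Finsupp.single_apply]
  split_ifs <;> subst_vars <;> first | exact absurd le_rfl hxy | omega

lemma monomial_mem_JHIdeal_of_not_isStdMon {μ : H →₀ ℕ} (hμ : ¬ IsStdMon μ) :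
    monomial μ (1 : K) ∈ JHIdeal K H := by
  obtain ⟨x, y, hxy, hyx, hle⟩ := exists_single_add_single_le_of_not_isStdMon hμ
  obtain ⟨δ, rfl⟩ := le_iff_exists_add'.mp hle
  rw [← one_mul (1 : K), ← monomial_mul, ← X_mul_X_eq_monomial]
  exact Ideal.mul_mem_left _ _ (Ideal.subset_span ⟨x, y, hxy, hyx, rfl⟩)

variable (hlead : ∀ x y : H, ¬ x ≤ y → ¬ y ≤ x → ∃ g ∈ I,
  coeff (Finsupp.single x 1 + Finsupp.single y 1) g = 1 ∧
    IsLeadMon σ g (Finsupp.single x 1 + Finsupp.single y 1))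
include hlead

lemma exists_mem_coeff_eq_of_not_isStdMon {ν : H →₀ ℕ} (hν : ¬ IsStdMon ν) (c : K) :
    ∃ g ∈ I, coeff ν g = c ∧ ∀ ρ ∈ g.support, ρ ≠ ν → RevLexLT σ ρ ν := by
  classical
  obtain ⟨x, y, hxy, hyx, hle⟩ := exists_single_add_single_le_of_not_isStdMon hν
  obtain ⟨g, hgI, hg_coeff, hg_lead⟩ := hlead x y hxy hyx
  obtain ⟨δ, rfl⟩ := le_iff_exists_add'.mp hle
  refine ⟨monomial δ c * g, I.mul_mem_left _ hgI, ?_, fun ρ hρ hne => ?_⟩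
  · rw [coeff_monomial_mul', if_pos le_self_add, add_tsub_cancel_left, hg_coeff, mul_one]
  rw [mem_support_iff, coeff_monomial_mul'] at hρ
  obtain ⟨ρ, rfl⟩ := le_iff_exists_add.mp (not_not.mp fun h => hρ (if_neg h))
  rw [if_pos le_self_add, add_tsub_cancel_left] at hρ
  exact (hg_lead.2 ρ (mem_support_iff.mpr (right_ne_zero_of_mul hρ))
    fun h => hne (h ▸ rfl)).add_left δ

variable [Finite H] (hσ : Function.Injective σ)
include hσ

lemma exists_sub_forall_isStdMon (n : ℕ) :
    ∀ f : MvPolynomial H K, (∀ ρ ∈ f.support, ¬ IsStdMon ρ → revLexRank σ ρ < n) →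
      ∃ q ∈ I, (∀ ρ ∈ (f - q).support, IsStdMon ρ) ∧ ∀ ρ ∈ q.support, revLexRank σ ρ < n := by
  classical
  induction n with
  | zero =>
    refine fun f hf => ⟨0, I.zero_mem, fun ρ hρ => ?_, by simp⟩
    by_contra hρstd
    exact Nat.not_lt_zero _ (hf ρ (by simpa using hρ) hρstd)
  | succ n ih =>
    intro f hf
    -- the rank is injective, so at most one monomial of `f` has rank `n`: straighten it away
    by_cases htop : ∃ ν ∈ f.support, ¬ IsStdMon ν ∧ revLexRank σ ν = n
    · obtain ⟨ν, -, hν, rfl⟩ := htop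
      obtain ⟨g, hgI, hg_coeff, hg_lt⟩ :=
        exists_mem_coeff_eq_of_not_isStdMon hlead hν (coeff ν f)
      have hg_rank : ∀ ρ ∈ g.support, ρ ≠ ν → revLexRank σ ρ < revLexRank σ ν :=
        fun ρ hρ hne => revLexRank_lt_revLexRank hσ (hg_lt ρ hρ hne)
      obtain ⟨q, hqI, hq_std, hq_rank⟩ := ih (f - g) fun ρ hρ hρstd => by
        have hne : ρ ≠ ν := by
          rintro rfl
          simp [coeff_sub, hg_coeff] at hρ
        rcases Finset.mem_union.mp (support_sub _ _ _ hρ) with hρ | hρ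
        · exact (Nat.lt_succ_iff.mp (hf ρ hρ hρstd)).lt_of_ne ((revLexRank_injective hσ).ne hne)
        · exact hg_rank ρ hρ hne
      refine ⟨g + q, I.add_mem hgI hqI, by rwa [← sub_sub], fun ρ hρ => ?_⟩
      rcases Finset.mem_union.mp (support_add hρ) with hρ | hρ
      · rcases eq_or_ne ρ ν with rfl | hne
        exacts [Nat.lt_succ_self _, (hg_rank ρ hρ hne).trans (Nat.lt_succ_self _)]
      · exact (hq_rank ρ hρ).trans (Nat.lt_succ_self _)
    · obtain ⟨q, hqI, hq_std, hq_rank⟩ := ih f fun ρ hρ hρstd =>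
        (Nat.lt_succ_iff.mp (hf ρ hρ hρstd)).lt_of_ne fun h => htop ⟨ρ, hρ, hρstd, h⟩
      exact ⟨q, hqI, hq_std, fun ρ hρ => (hq_rank ρ hρ).trans (Nat.lt_succ_self _)⟩

variable (hASL1 : LinearIndependent K
  (fun μ : {μ : H →₀ ℕ // IsStdMon μ} => Ideal.Quotient.mk I (monomial μ.1 (1 : K))))
include hASL1

lemma not_isStdMon_of_isLeadMon {f : MvPolynomial H K} (hf : f ∈ I) {μ : H →₀ ℕ}
    (hμ : IsLeadMon σ f μ) : ¬ IsStdMon μ := by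
  intro hstd
  obtain ⟨q, hqI, hq_std, hq_rank⟩ := exists_sub_forall_isStdMon hlead hσ (revLexRank σ μ) f
    fun ρ hρ hρstd => revLexRank_lt_revLexRank hσ (hμ.2 ρ hρ fun h => hρstd (h ▸ hstd))
  have hfq : f = q :=
    sub_eq_zero.mp (eq_zero_of_mem_of_forall_isStdMon hASL1 (I.sub_mem hf hqI) hq_std)
  exact (hq_rank μ (hfq ▸ hμ.1)).false

lemma initialIdeal_eq_JHIdeal : initialIdeal σ I = JHIdeal K H := by
  apply le_antisymm
  · refine Ideal.span_le.mpr ?_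
    rintro p ⟨f, hf, μ, hμ, rfl⟩
    exact monomial_mem_JHIdeal_of_not_isStdMon (not_isStdMon_of_isLeadMon hlead hσ hASL1 hf hμ)
  · refine Ideal.span_le.mpr ?_
    rintro p ⟨x, y, hxy, hyx, rfl⟩
    obtain ⟨g, hgI, -, hg_lead⟩ := hlead x y hxy hyx
    exact Ideal.subset_span ⟨g, hgI, _, hg_lead, X_mul_X_eq_monomial x y⟩

end Reduction

theorem stmt15_general {K H : Type*} [Field K] [Fintype H] [PartialOrder H]
    (I : Ideal (MvPolynomial H K))
    (srel : H → H → MvPolynomial H K)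
    (hASL2 : ∀ x y : H, ¬ x ≤ y → ¬ y ≤ x → srel x y ∈ I ∧
      ∃ (s : Finset (H × H)) (c : H × H → K),
        (∀ p ∈ s, p.1 ≤ p.2 ∧ p.1 < x ∧ p.1 < y) ∧
        srel x y = X x * X y - ∑ p ∈ s, c p • (X p.1 * X p.2))
    (hASL1 : LinearIndependent K
      (fun μ : {μ : H →₀ ℕ // IsStdMon μ} =>
        Ideal.Quotient.mk I (monomial μ.1 (1 : K))))
    (σ : H → ℕ) (hσ : IsLinExt σ) :
    (∀ x y : H, ¬ x ≤ y → ¬ y ≤ x →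
      IsLeadMon σ (srel x y) (Finsupp.single x 1 + Finsupp.single y 1)) ∧
    initialIdeal σ I = Ideal.span { p | ∃ x y : H, ¬ x ≤ y ∧ ¬ y ≤ x ∧
      ∃ μ, IsLeadMon σ (srel x y) μ ∧ p = monomial μ (1 : K) } ∧
    initialIdeal σ I = JHIdeal K H := by
  have hsrel : ∀ x y : H, ¬ x ≤ y → ¬ y ≤ x →
      coeff (Finsupp.single x 1 + Finsupp.single y 1) (srel x y) = 1 ∧
        IsLeadMon σ (srel x y) (Finsupp.single x 1 + Finsupp.single y 1) := by
    intro x y hxy hyx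
    obtain ⟨-, s, c, hs, heq⟩ := hASL2 x y hxy hyx
    exact isLeadMon_of_eq_X_mul_X_sub hσ hs heq
  have hJ : initialIdeal σ I = JHIdeal K H := initialIdeal_eq_JHIdeal
    (fun x y hxy hyx => ⟨srel x y, (hASL2 x y hxy hyx).1, hsrel x y hxy hyx⟩) hσ.1 hASL1
  refine ⟨fun x y hxy hyx => (hsrel x y hxy hyx).2, ?_, hJ⟩
  rw [hJ, JHIdeal]
  congr 1
  ext p
  constructor
  · rintro ⟨x, y, hxy, hyx, rfl⟩
    exact ⟨x, y, hxy, hyx, _, (hsrel x y hxy hyx).2, X_mul_X_eq_monomial x y⟩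
  · rintro ⟨x, y, hxy, hyx, μ, hμ, rfl⟩
    rw [hμ.unique hσ.1 (hsrel x y hxy hyx).2]
    exact ⟨x, y, hxy, hyx, (X_mul_X_eq_monomial x y).symm⟩

/-- let `A = K[H]/I` be a homogeneous ASL on the finite poset
`H`, with straightening relations `srel x y = xy − ∑ λ_{zt} zt ∈ I`
(`z ≤ t`, `z < x`, `z < y`) for the incomparable pairs `x, y`, and with the
standard monomials linearly independent in `A` (ASL1).  Then for every revlex
term order extending a linear extension `σ` of the order of `H`:
the straightening relations have leading monomial `xy`, they form a Gröbner
basis of `I` (their leading monomials generate `in_τ(I)`), and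
`in_τ(I) = J_H`. -/
theorem stmt15 {K H : Type*} [Field K] [Fintype H] [DecidableEq H] [PartialOrder H]
    (I : Ideal (MvPolynomial H K))
    (hhom : I.IsHomogeneous (homogeneousSubmodule H K))
    (srel : H → H → MvPolynomial H K)
    (hASL2 : ∀ x y : H, ¬ x ≤ y → ¬ y ≤ x → srel x y ∈ I ∧
      ∃ (s : Finset (H × H)) (c : H × H → K),
        (∀ p ∈ s, p.1 ≤ p.2 ∧ p.1 < x ∧ p.1 < y) ∧
        srel x y = X x * X y - ∑ p ∈ s, c p • (X p.1 * X p.2))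
    (hASL1 : LinearIndependent K
      (fun μ : {μ : H →₀ ℕ // IsStdMon μ} =>
        Ideal.Quotient.mk I (monomial μ.1 (1 : K))))
    (σ : H → ℕ) (hσ : IsLinExt σ) :
    (∀ x y : H, ¬ x ≤ y → ¬ y ≤ x →
      IsLeadMon σ (srel x y) (Finsupp.single x 1 + Finsupp.single y 1)) ∧
    initialIdeal σ I = Ideal.span { p | ∃ x y : H, ¬ x ≤ y ∧ ¬ y ≤ x ∧
      ∃ μ, IsLeadMon σ (srel x y) μ ∧ p = monomial μ (1 : K) } ∧
    initialIdeal σ I = JHIdeal K H :=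
  stmt15_general I srel hASL2 hASL1 σ hσ
end
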